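/- Protected-bit (external-state style) family detects all copies. Let V be a nonempty type and enc : V → List Byte an injective function with (enc v).length = n for all v. For each pair (a, v) ∈ ℕ × V, define the address-dependent structure s⟨a,v⟩ with value type V, address set ℕ, size n + 1, encoding s⟨a,v⟩.to_byte v' a' = f :: enc v' where the flag byte f is 1 if (a, v) = (a', v') and 0 otherwise, and decoding s⟨a,v⟩.from_byte (c :: bl) a' = some v' if bl = enc v' for some v' and c equals the flag that s⟨a,v⟩.to_byte v' a' would produce, and none in all other cases (and none on lists not of the form c :: bl with bl.length = n). Then: (i) each s⟨a,v⟩ is an address-dependent semantic structure, i.e., (s⟨a,v⟩.to_byte v' a').length = n + 1 and s⟨a,v⟩.from_byte (s⟨a,v⟩.to_byte v' a') a' = some v' for all v' and a'; and (ii) for every value v ∈ V, every read address a' ∈ ℕ, and every byte c, there exist a'' ∈ ℕ and v'' ∈ V such that s⟨a'',v''⟩.from_byte (c :: enc v) a' = none. In other words, whatever flag byte a bitwise copy of the body enc v carries at address a', some member of the family rejects it. -/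
import Mathlib


/-- Bytes are `Fin 256`. -/
abbrev Byte := Fin 256

/-- The flag byte used by the protected-bit structure `s⟨a,v⟩`: it is `1`
exactly for the protected address/value pair `(a, v)` and `0` otherwise. -/
noncomputable def pbFlag {V : Type} (a : ℕ) (v : V) (a' : ℕ) (v' : V) : Byte :=
  open Classical in if a = a' ∧ v = v' then (1 : Byte) else (0 : Byte)

/-- Encoding of the protected-bit structure `s⟨a,v⟩`:
`to_byte v' a' = flag :: enc v'`. -/
noncomputable def pbToByte {V : Type} (enc : V → List Byte) (a : ℕ) (v : V) :
    V → ℕ → List Byte :=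
  fun v' a' => pbFlag a v a' v' :: enc v'

/-- Decoding of the protected-bit structure `s⟨a,v⟩`: on a list `c :: bl`
with `bl = enc v'` and `c` the flag byte that `to_byte v' a'` would produce
it returns `some v'`; in all other cases it returns `none`. -/
noncomputable def pbFromByte {V : Type} (enc : V → List Byte) (a : ℕ) (v : V) :
    List Byte → ℕ → Option V :=
  open Classical in
  fun l a' =>
    match l with
    | [] => none
    | c :: bl =>
      if h : ∃ v' : V, bl = enc v' ∧ c = pbFlag a v a' v' then some h.choose
      else none

/-- Protected-bit (external-state style) family detects all copies:
(i) each `s⟨a,v⟩` is an address-dependent semantic structure (length law and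
decode-after-encode law hold); (ii) for every value `v`, read address `a'`
and flag byte `c` there is a member `s⟨a'',v''⟩` of the family that rejects
the byte list `c :: enc v`, i.e. whatever flag byte a bitwise copy of the
body `enc v` carries at `a'`, some member of the family rejects it. -/
theorem protected_bit_family {V : Type} [Nonempty V] (enc : V → List Byte)
    (n : ℕ) (henc : Function.Injective enc) (hlen : ∀ v : V, (enc v).length = n) :
    (∀ (a : ℕ) (v : V) (v' : V) (a' : ℕ),
      (pbToByte enc a v v' a').length = n + 1 ∧
      pbFromByte enc a v (pbToByte enc a v v' a') a' = some v') ∧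
    (∀ (v : V) (a' : ℕ) (c : Byte),
      ∃ (a'' : ℕ) (v'' : V), pbFromByte enc a'' v'' (c :: enc v) a' = none) := by
  constructor
  · intro a v v' a'
    constructor
    · simp [pbToByte, hlen]
    · have h : ∃ w : V, enc v' = enc w ∧ pbFlag a v a' v' = pbFlag a v a' w :=
        ⟨v', rfl, rfl⟩
      simp only [pbToByte, pbFromByte, dif_pos h]
      have hspec := h.choose_spec
      have : h.choose = v' := henc (hspec.1.symm)
      rw [this]
  · intro v a' c
    by_cases hc : c = 0
    · refine ⟨a', v, ?_⟩
      simp only [pbFromByte]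
      rw [dif_neg]
      rintro ⟨w, hw, hcw⟩
      have : w = v := henc hw.symm
      subst this
      rw [hc] at hcw
      simp [pbFlag] at hcw
    · refine ⟨a' + 1, v, ?_⟩
      simp only [pbFromByte]
      rw [dif_neg]
      rintro ⟨w, hw, hcw⟩
      have : w = v := henc hw.symm
      subst this
      have hne : a' + 1 ≠ a' := by omega
      rw [pbFlag, if_neg (by tauto)] at hcw
      exact hc hcw
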